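/- arXiv:2106.12463 — 2 statements merged into one kernel-verified Lean document; each statement's English description precedes it below -/
import Mathlib

section
/- The CTRL supermap is unitary-preserving on sector-preserving channels: if Ũ is a unitary sector-preserving channel of type (1,d), i.e. Ũ(ρ) = (1⊕U) ρ (1⊕U)† with U unitary on ℂ^d, then CTRL(Ũ) is the unitary channel ρ ↦ (|0⟩⟨0|⊗I + |1⟩⟨1|⊗U) ρ (|0⟩⟨0|⊗I + |1⟩⟨1|⊗U)†. -/
open Matrix Kronecker

noncomputable section

/-- The controlled Kraus operator `α • (|0⟩⟨0| ⊗ I) + |1⟩⟨1| ⊗ C` on `ℂ² ⊗ ℂ^d`. -/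
def ctrlOp {d : ℕ} (α : ℂ) (C : Matrix (Fin d) (Fin d) ℂ) :
    Matrix (Fin 2 × Fin d) (Fin 2 × Fin d) ℂ :=
  α • (Matrix.single (0 : Fin 2) 0 (1:ℂ) ⊗ₖ (1 : Matrix (Fin d) (Fin d) ℂ))
    + Matrix.single (1 : Fin 2) 1 (1:ℂ) ⊗ₖ C

/-- Block-diagonal operator `α ⊕ C` on `H_S = ℂ ⊕ ℂ^d`. -/
def sectOp {d : ℕ} (α : ℂ) (C : Matrix (Fin d) (Fin d) ℂ) :
    Matrix (Unit ⊕ Fin d) (Unit ⊕ Fin d) ℂ :=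
  Matrix.fromBlocks (α • (1 : Matrix Unit Unit ℂ)) 0 0 C

/-- The isometry `V : H_T → H_S` embedding `ℂ^d` onto the sector `H_S^1`. -/
def Vemb (d : ℕ) : Matrix (Unit ⊕ Fin d) (Fin d) ℂ :=
  Matrix.of fun s t => match s with
    | Sum.inl _ => 0
    | Sum.inr i => if i = t then 1 else 0

/-- The unit vector `|s⁰⟩` spanning the one-dimensional sector `H_S^0`. -/
def s0vec (d : ℕ) : (Unit ⊕ Fin d) → ℂ :=
  fun s => match s with | Sum.inl _ => 1 | Sum.inr _ => 0

/-- The controlled-SWAP unitary on `ℂ² ⊗ H_S ⊗ H_S`. -/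
def cswap (d : ℕ) :
    Matrix (Fin 2 × (Unit ⊕ Fin d) × (Unit ⊕ Fin d))
           (Fin 2 × (Unit ⊕ Fin d) × (Unit ⊕ Fin d)) ℂ :=
  Matrix.of fun p q =>
    if p.1 = q.1 then
      (if p.1 = 0 then (if p.2 = q.2 then 1 else 0)
       else (if p.2.1 = q.2.2 ∧ p.2.2 = q.2.1 then 1 else 0))
    else 0

/-- The encoding operator `I ⊗ V ⊗ |s⁰⟩ : ℂ² ⊗ H_T → ℂ² ⊗ H_S ⊗ H_S`. -/
def encodeOp (d : ℕ) :
    Matrix (Fin 2 × (Unit ⊕ Fin d) × (Unit ⊕ Fin d)) (Fin 2 × Fin d) ℂ :=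
  Matrix.of fun p q =>
    (if p.1 = q.1 then 1 else 0) * Vemb d p.2.1 q.2 * s0vec d p.2.2

/-- The decoding operator `I ⊗ V† ⊗ ⟨s⁰| : ℂ² ⊗ H_S ⊗ H_S → ℂ² ⊗ H_T`. -/
def decodeOp (d : ℕ) :
    Matrix (Fin 2 × Fin d) (Fin 2 × (Unit ⊕ Fin d) × (Unit ⊕ Fin d)) ℂ :=
  Matrix.of fun q p =>
    (if q.1 = p.1 then 1 else 0) * star (Vemb d p.2.1 q.2) * star (s0vec d p.2.2)

/-- The operator `I ⊗ I ⊗ A` on `ℂ² ⊗ H_S ⊗ H_S`. -/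
def liftThird {d : ℕ} (A : Matrix (Unit ⊕ Fin d) (Unit ⊕ Fin d) ℂ) :
    Matrix (Fin 2 × (Unit ⊕ Fin d) × (Unit ⊕ Fin d))
           (Fin 2 × (Unit ⊕ Fin d) × (Unit ⊕ Fin d)) ℂ :=
  Matrix.of fun p q =>
    (if p.1 = q.1 ∧ p.2.1 = q.2.1 then 1 else 0) * A p.2.2 q.2.2

lemma cswap_mul_apply {d : ℕ} {n : Type*} [Fintype n]
    (M : Matrix (Fin 2 × (Unit ⊕ Fin d) × (Unit ⊕ Fin d)) n ℂ)
    (p : Fin 2 × (Unit ⊕ Fin d) × (Unit ⊕ Fin d)) (q : n) :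
    (cswap d * M) p q =
    if p.1 = 0 then M p q else M (p.1, p.2.2, p.2.1) q := by
  obtain ⟨a, s, t⟩ := p
  simp only [mul_apply, cswap, Matrix.of_apply, Fintype.sum_prod_type]
  fin_cases a <;>
  · rcases s with _ | i <;> rcases t with _ | j <;>
      simp [Finset.sum_ite_eq, ite_and, Prod.ext_iff, Sum.inr.injEq, eq_comm]

lemma lift_mul_apply {d : ℕ} {n : Type*} [Fintype n]
    (A : Matrix (Unit ⊕ Fin d) (Unit ⊕ Fin d) ℂ)
    (M : Matrix (Fin 2 × (Unit ⊕ Fin d) × (Unit ⊕ Fin d)) n ℂ)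
    (p : Fin 2 × (Unit ⊕ Fin d) × (Unit ⊕ Fin d)) (q : n) :
    (liftThird A * M) p q = ∑ x, A p.2.2 x * M (p.1, p.2.1, x) q := by
  obtain ⟨a, s, t⟩ := p
  simp only [mul_apply, liftThird, Matrix.of_apply, Fintype.sum_prod_type]
  rcases s with _ | i <;>
    simp [Finset.sum_ite_eq, ite_and, ite_mul, zero_mul, Finset.mul_sum]

lemma key {d : ℕ} (U : Matrix (Fin d) (Fin d) ℂ) :
    decodeOp d * cswap d * liftThird (sectOp 1 U) * cswap d * encodeOp d
      = ctrlOp 1 U := by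
  have assoc : decodeOp d * cswap d * liftThird (sectOp 1 U) * cswap d * encodeOp d
      = decodeOp d * (cswap d * (liftThird (sectOp 1 U) * (cswap d * encodeOp d))) := by
    simp only [Matrix.mul_assoc]
  rw [assoc]
  ext ⟨a, i⟩ ⟨b, j⟩
  simp only [mul_apply (M := decodeOp d)]
  simp only [cswap_mul_apply, lift_mul_apply]
  fin_cases a <;> fin_cases b <;>
    simp [Fintype.sum_prod_type, Fintype.sum_sum_type, Fin.sum_univ_two, decodeOp, encodeOp,
      sectOp, Vemb, s0vec, ctrlOp, Matrix.fromBlocks, Matrix.single, Matrix.one_apply,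
      Finset.sum_ite_eq, ite_and, mul_ite, ite_mul, Finset.mul_sum, eq_comm]

/-- the CTRL supermap is unitary-preserving on sector-preserving
channels: for a unitary sector-preserving channel `ρ ↦ (1 ⊕ U) ρ (1 ⊕ U)ᴴ`
(with `U` unitary on `ℂ^d`), the output of the CTRL circuit is the unitary channel
`ρ ↦ (|0⟩⟨0| ⊗ I + |1⟩⟨1| ⊗ U) ρ (|0⟩⟨0| ⊗ I + |1⟩⟨1| ⊗ U)ᴴ`. -/
theorem ctrl_supermap_unitary_preserving {d : ℕ}
    (U : Matrix (Fin d) (Fin d) ℂ)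
    (hU : U ∈ Matrix.unitaryGroup (Fin d) ℂ) :
    (ctrlOp 1 U ∈ Matrix.unitaryGroup (Fin 2 × Fin d) ℂ) ∧
    (∀ ρ : Matrix (Fin 2 × Fin d) (Fin 2 × Fin d) ℂ,
      (decodeOp d * cswap d * liftThird (sectOp 1 U) * cswap d * encodeOp d) * ρ
        * ((decodeOp d * cswap d * liftThird (sectOp 1 U) * cswap d * encodeOp d))ᴴ
      = ctrlOp 1 U * ρ * (ctrlOp 1 U)ᴴ) := by
  constructor
  · rw [Matrix.mem_unitaryGroup_iff']
    have h1 : star U * U = 1 := hU.1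
    ext ⟨a, i⟩ ⟨b, j⟩
    have hentry : ∀ k l : Fin d, ∑ m, (starRingEnd ℂ) (U m k) * U m l = if k = l then 1 else 0 := by
      intro k l
      have := congrFun (congrFun h1 k) l
      simpa [mul_apply, Matrix.one_apply] using this
    simp only [star_eq_conjTranspose, mul_apply, conjTranspose_apply, Fintype.sum_prod_type,
      ctrlOp, Matrix.add_apply, Matrix.smul_apply, kroneckerMap_apply, one_smul,
      Matrix.single, Matrix.of_apply, Matrix.one_apply]
    have hentry' : ∀ k l : Fin d, ∑ m, U m l * (starRingEnd ℂ) (U m k) = if k = l then 1 else 0 := by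
      intro k l
      rw [← hentry k l]
      exact Finset.sum_congr rfl fun m _ => (mul_comm _ _)
    fin_cases a <;> fin_cases b <;>
      simp [Fin.sum_univ_succ, ite_and, Prod.ext_iff, hentry', hentry, eq_comm]
  · intro ρ
    rw [key]
end
end

section
/- The composition CTRL⁻¹ ∘ CTRL acts as the identity on sector-preserving channels of type (1,d): for every channel C on ℂ^d and every Kraus operator C_1 of C, CTRL⁻¹(CTRL(C̃[C_1])) = C̃[C_1]. -/
open Matrix Kronecker

noncomputable section

/-- The isometry `V : ℂ ⊕ ℂ^d → ℂ² ⊗ ℂ^d` with `V|ψ⟩ = |1⟩⊗|ψ⟩` on the `d`-sector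
and `V(1⊕0) = |0⟩⊗|φ₀⟩`. -/
def Viso {d : ℕ} (φ₀ : Fin d → ℂ) :
    Matrix (Fin 2 × Fin d) (Unit ⊕ Fin d) ℂ :=
  Matrix.of fun p s => match s with
    | Sum.inl _ => (if p.1 = 0 then 1 else 0) * φ₀ p.2
    | Sum.inr j => if p.1 = 1 ∧ p.2 = j then 1 else 0

lemma Viso_isometry {d : ℕ} (φ₀ : Fin d → ℂ) (hφ : ∑ t, star (φ₀ t) * φ₀ t = 1) :
    (Viso φ₀)ᴴ * Viso φ₀ = 1 := by
  ext s s'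
  cases s <;> cases s' <;>
    simp [Matrix.mul_apply, Viso, Matrix.conjTranspose_apply, Fintype.sum_prod_type,
      Fin.sum_univ_two, Matrix.one_apply, mul_comm, hφ, Finset.mul_sum, Finset.sum_ite_eq,
      eq_comm]
  rw [← hφ]; exact Finset.sum_congr rfl fun t _ => mul_comm _ _

lemma kraus_eq {d : ℕ} (α : ℂ) (C : Matrix (Fin d) (Fin d) ℂ) :
    decodeOp d * cswap d * liftThird (sectOp α C) * cswap d * encodeOp d = ctrlOp α C := by
  ext ⟨a, t⟩ ⟨b, u⟩
  fin_cases a <;> fin_cases b <;>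
    simp [Matrix.mul_apply, decodeOp, cswap, liftThird, sectOp, encodeOp, ctrlOp, Vemb, s0vec,
      Fintype.sum_prod_type, Fintype.sum_sum_type, Fin.sum_univ_two,
      Matrix.single, Matrix.one_apply, Finset.sum_ite_eq, Finset.sum_ite_eq',
      ite_and, Finset.mul_sum, Finset.sum_mul]
  simp [eq_comm]

lemma kraus_viso {d : ℕ} (φ₀ : Fin d → ℂ) (α : ℂ) (C : Matrix (Fin d) (Fin d) ℂ) :
    ctrlOp α C * Viso φ₀ = Viso φ₀ * sectOp α C := by
  ext ⟨a, t⟩ s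
  cases s <;> fin_cases a <;>
    simp [Matrix.mul_apply, ctrlOp, Viso, sectOp, Vemb, s0vec,
      Fintype.sum_prod_type, Fintype.sum_sum_type, Fin.sum_univ_two,
      Matrix.single, Matrix.one_apply, Finset.sum_ite_eq, Finset.sum_ite_eq',
      ite_and, Finset.mul_sum, Finset.sum_mul, eq_comm]
  ring

/-- `CTRL⁻¹ ∘ CTRL` is the identity on sector-preserving channels of
type `(1,d)`: applying the CTRL circuit to the sector-preserving channel `𝒞̃[C 0]`
(Kraus operators `δ_{i0} ⊕ C i`) and then the inverse construction `CTRL⁻¹`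
(conjugation by the isometry `V`) returns `𝒞̃[C 0]`. -/
theorem ctrl_inverse_comp_ctrl_id {d n : ℕ}
    (φ₀ : Fin d → ℂ) (hφ : ∑ t, star (φ₀ t) * φ₀ t = 1)
    (C : Fin (n+1) → Matrix (Fin d) (Fin d) ℂ)
    (hC : ∑ i, (C i)ᴴ * C i = 1) :
    ∀ ρ : Matrix (Unit ⊕ Fin d) (Unit ⊕ Fin d) ℂ,
      (Viso φ₀)ᴴ
        * (∑ i,
            (decodeOp d * cswap d * liftThird (sectOp (if i = 0 then (1:ℂ) else 0) (C i))
              * cswap d * encodeOp d)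
            * (Viso φ₀ * ρ * (Viso φ₀)ᴴ)
            * ((decodeOp d * cswap d * liftThird (sectOp (if i = 0 then (1:ℂ) else 0) (C i))
              * cswap d * encodeOp d))ᴴ)
        * Viso φ₀
      = ∑ i, sectOp (if i = 0 then (1:ℂ) else 0) (C i) * ρ
          * (sectOp (if i = 0 then (1:ℂ) else 0) (C i))ᴴ := by
  intro ρ
  rw [Matrix.mul_sum, Matrix.sum_mul]
  refine Finset.sum_congr rfl fun i _ => ?_
  set α := (if i = 0 then (1:ℂ) else 0)
  rw [kraus_eq]
  have h1 : (Viso φ₀)ᴴ * (ctrlOp α (C i) * Viso φ₀) = sectOp α (C i) := by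
    rw [kraus_viso, ← Matrix.mul_assoc, Viso_isometry φ₀ hφ, one_mul]
  calc (Viso φ₀)ᴴ * (ctrlOp α (C i) * (Viso φ₀ * ρ * (Viso φ₀)ᴴ) * (ctrlOp α (C i))ᴴ) * Viso φ₀
      = ((Viso φ₀)ᴴ * (ctrlOp α (C i) * Viso φ₀)) * ρ
          * ((Viso φ₀)ᴴ * (ctrlOp α (C i) * Viso φ₀))ᴴ := by
        simp only [Matrix.conjTranspose_mul, Matrix.conjTranspose_conjTranspose,
          Matrix.mul_assoc]
    _ = sectOp α (C i) * ρ * (sectOp α (C i))ᴴ := by rw [h1]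
end
end
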